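/- arXiv:1904.12727 — 7 statements merged into one kernel-verified Lean document; each statement's English description precedes it below -/
import Mathlib

section
/- Let d be a positive integer, let 1 ≤ j ≤ d, set t := cj and ε := (3d)^{−12d}(50d)^{−3d²/2}. Then for every nonnegative integer m and every w ∈ [0, ε], the m-th derivative of w ↦ R(j,w) satisfies |∂_w^m R(j,w)| ≤ m!·C(m+3,3)·e^{g(ε)}·(4e^{2tε}t)^m, where g(ε) := tε/(1 + √(1 + tε²)). -/
/-!
Write `t = c j`. On the disc `‖z‖ < 1/(3t)` the expression defining `R(j, ·)`, read with the
principal branches of `(1 + t z²)^{1/2}` and `(1 + t z²)^{3/2}`, is holomorphic (there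
`‖t z²‖ ≤ 1/54`, so `1 + t z²` stays near `1`) and bounded by `2`. Cauchy's estimate on the disc
of radius `1/(4t)` about the real point `w` bounds the `m`-th derivative by `2 m! (4t)^m`, which
is below the claim for `m ≥ 1` as `C(m+3, 3) ≥ 2`. For `m = 0` one checks directly that
`(√(1+tw²) - w) / ((1-w)(1+tw²)^{3/2}) ≤ 1` and that the exponent is increasing in `w`.
-/

noncomputable def cconst : ℝ := 2 * Real.pi ^ 2 / 3

/-- The function `R(j, w)` approximating `p(n+j)/p(n)`. -/
noncomputable def Rfun (j : ℕ) (w : ℝ) : ℝ :=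
  Real.exp (cconst * j * w / (1 + Real.sqrt (1 + cconst * j * w ^ 2))) *
      (Real.sqrt (1 + cconst * j * w ^ 2) - w) /
    ((1 - w) * (1 + cconst * j * w ^ 2) ^ ((3 : ℝ) / 2))

open Metric

theorem six_le_cconst : 6 ≤ cconst := by
  have := Real.pi_gt_three
  rw [cconst]; nlinarith

theorem cconst_le_seven : cconst ≤ 7 := by
  have := Real.pi_lt_d2
  have := Real.pi_pos
  rw [cconst]; nlinarith

noncomputable def eps (d : ℝ) : ℝ := (3 * d) ^ (-(12 * d)) * (50 * d) ^ (-(3 * d ^ 2 / 2))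

theorem eps_nonneg {d : ℝ} (hd : 0 ≤ d) : 0 ≤ eps d := by
  unfold eps; positivity

theorem mul_eps_le {d : ℝ} (hd : 1 ≤ d) : d * eps d ≤ 1 / 3 ^ 12 := by
  have h50 : (50 * d) ^ (-(3 * d ^ 2 / 2)) ≤ 1 :=
    Real.rpow_le_one_of_one_le_of_nonpos (by linarith) (by nlinarith)
  have h3 : (3 * d) ^ (-(12 * d)) ≤ ((3 * d) ^ 12)⁻¹ := by
    rw [← Real.rpow_natCast, ← Real.rpow_neg (by linarith)]
    exact Real.rpow_le_rpow_of_exponent_le (by linarith) (by push_cast; linarith)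
  have hpow : 3 ^ 12 * d ≤ (3 * d) ^ 12 := by
    rw [mul_pow]; gcongr; exact le_self_pow₀ hd (by norm_num)
  calc d * eps d ≤ d * ((3 * d) ^ 12)⁻¹ := by
        unfold eps
        gcongr
        exact (mul_le_of_le_one_right (by positivity) h50).trans h3
    _ ≤ 1 / 3 ^ 12 := by
        rw [← div_eq_mul_inv, div_le_div_iff₀ (by positivity) (by norm_num)]
        linarith

noncomputable def Rt (t w : ℝ) : ℝ :=
  Real.exp (t * w / (1 + Real.sqrt (1 + t * w ^ 2))) * (Real.sqrt (1 + t * w ^ 2) - w) /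
    ((1 - w) * (1 + t * w ^ 2) ^ ((3 : ℝ) / 2))

theorem Rfun_eq_Rt (j : ℕ) : Rfun j = Rt (cconst * j) := rfl

theorem sub_le_one_sub_mul_pow_three {s w : ℝ} (hs : 1 ≤ s) (hw : w ≤ 1 / 2) :
    s - w ≤ (1 - w) * s ^ 3 := by
  have : 0 ≤ s ^ 2 + s - w * (s ^ 2 + s + 1) := by nlinarith
  nlinarith [mul_nonneg (sub_nonneg.2 hs) this]

theorem mul_div_one_add_sqrt_le {t w ε : ℝ} (ht : 0 ≤ t) (hw0 : 0 ≤ w) (hwε : w ≤ ε) :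
    t * w / (1 + Real.sqrt (1 + t * w ^ 2)) ≤ t * ε / (1 + Real.sqrt (1 + t * ε ^ 2)) := by
  set s := Real.sqrt (1 + t * w ^ 2)
  set b := Real.sqrt (1 + t * ε ^ 2)
  have hs : s ^ 2 = 1 + t * w ^ 2 := Real.sq_sqrt (by positivity)
  have hb : b ^ 2 = 1 + t * ε ^ 2 := Real.sq_sqrt (by positivity)
  have hs0 : 0 ≤ s := Real.sqrt_nonneg _
  have hb0 : 0 ≤ b := Real.sqrt_nonneg _
  have hε0 : 0 ≤ ε := hw0.trans hwε
  -- `(w b)² - (ε s)² = w² - ε²`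
  have hwb : w * b ≤ ε * s := by
    refine (pow_le_pow_iff_left₀ (by positivity) (by positivity) two_ne_zero).1 ?_
    rw [mul_pow, mul_pow, hs, hb]
    nlinarith [mul_le_mul hwε hwε hw0 (hw0.trans hwε)]
  rw [div_le_div_iff₀ (by positivity) (by positivity)]
  nlinarith [mul_le_mul_of_nonneg_left hwb ht, mul_le_mul_of_nonneg_left hwε ht]

theorem abs_Rt_le {t w ε : ℝ} (ht : 0 ≤ t) (hw0 : 0 ≤ w) (hwε : w ≤ ε) (hε : ε ≤ 1 / 2) :
    |Rt t w| ≤ Real.exp (t * ε / (1 + Real.sqrt (1 + t * ε ^ 2))) := by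
  set s := Real.sqrt (1 + t * w ^ 2) with hs_def
  have hs : s ^ 2 = 1 + t * w ^ 2 := Real.sq_sqrt (by positivity)
  have hs1 : 1 ≤ s := Real.one_le_sqrt.2 (by nlinarith [sq_nonneg w])
  have hpow : (1 + t * w ^ 2) ^ ((3 : ℝ) / 2) = s ^ 3 := by
    rw [hs_def, Real.sqrt_eq_rpow, ← Real.rpow_mul_natCast (by positivity)]
    norm_num
  have hden : 0 < (1 - w) * s ^ 3 := by
    apply mul_pos <;> [linarith; positivity]
  have hratio : (s - w) / ((1 - w) * s ^ 3) ≤ 1 :=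
    (div_le_one hden).2 (sub_le_one_sub_mul_pow_three hs1 (hwε.trans hε))
  have hnum : 0 ≤ s - w := by linarith
  rw [Rt, ← hs_def, hpow, mul_div_assoc, abs_of_nonneg (by positivity)]
  calc _ ≤ Real.exp (t * w / (1 + s)) * 1 := by gcongr
    _ ≤ _ := by rw [mul_one]; exact Real.exp_le_exp.2 (mul_div_one_add_sqrt_le ht hw0 hwε)

theorem iteratedDeriv_eq_re_iteratedDeriv {f : ℝ → ℝ} {F : ℂ → ℂ} {s : Set ℂ} (hs : IsOpen s)
    (hF : DifferentiableOn ℂ F s) (hfF : ∀ x : ℝ, (x : ℂ) ∈ s → (f x : ℂ) = F x) (m : ℕ) :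
    ∀ x : ℝ, (x : ℂ) ∈ s → iteratedDeriv m f x = (iteratedDeriv m F x).re := by
  induction m with
  | zero => exact fun x hx => by simp [← hfF x hx]
  | succ m ih =>
    intro x hx
    have hsR : IsOpen (((↑) : ℝ → ℂ) ⁻¹' s) := hs.preimage Complex.continuous_ofReal
    have heq : iteratedDeriv m f =ᶠ[nhds x] fun y : ℝ => (iteratedDeriv m F y).re :=
      Filter.eventually_of_mem (hsR.mem_nhds hx) ih
    have hder : HasDerivAt (iteratedDeriv m F) (iteratedDeriv (m + 1) F x) x := by
      rw [iteratedDeriv_succ, iteratedDeriv_eq_iterate]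
      exact ((hF.analyticOnNhd hs).iterated_deriv m x hx).differentiableAt.hasDerivAt
    rw [iteratedDeriv_succ, heq.deriv_eq, hder.real_of_complex.deriv]

theorem re_cpow_one_half_nonneg (u : ℂ) : 0 ≤ (u ^ (1 / 2 : ℂ)).re := by
  rcases eq_or_ne u 0 with rfl | hu
  · simp
  rw [Complex.cpow_def_of_ne_zero hu, Complex.exp_re]
  have him : (Complex.log u * (1 / 2)).im = u.arg / 2 := by simp [Complex.log_im, div_eq_mul_inv]
  have hcos : 0 ≤ Real.cos (u.arg / 2) := Real.cos_nonneg_of_mem_Icc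
    ⟨by linarith [Complex.neg_pi_lt_arg u], by linarith [Complex.arg_le_pi u]⟩
  rw [him]
  positivity

theorem one_le_norm_one_add_cpow_one_half (u : ℂ) : 1 ≤ ‖1 + u ^ (1 / 2 : ℂ)‖ :=
  calc 1 ≤ (1 + u ^ (1 / 2 : ℂ)).re := by
        rw [Complex.add_re, Complex.one_re]; linarith [re_cpow_one_half_nonneg u]
    _ ≤ _ := Complex.re_le_norm _

section
variable {a : ℂ} {δ : ℝ}

theorem norm_one_add_cpow_one_half_le (ha : ‖a‖ ≤ δ) : ‖(1 + a) ^ (1 / 2 : ℂ)‖ ≤ 1 + δ := by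
  have h1 : ‖1 + a‖ ≤ 1 + δ := (norm_add_le _ _).trans (by rw [norm_one]; linarith)
  have hδ : 0 ≤ δ := (norm_nonneg a).trans ha
  have : (1 / 2 : ℂ) = ((1 / 2 : ℝ) : ℂ) := by norm_num
  rw [this, Complex.norm_cpow_real]
  calc ‖1 + a‖ ^ (1 / 2 : ℝ) ≤ (1 + δ) ^ (1 / 2 : ℝ) := by gcongr
    _ ≤ 1 + δ := Real.rpow_le_self_of_one_le (by linarith) (by norm_num)

theorem sq_le_norm_one_add_cpow_three_half (ha : ‖a‖ ≤ δ) (hδ : δ < 1) :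
    (1 - δ) ^ 2 ≤ ‖(1 + a) ^ (3 / 2 : ℂ)‖ := by
  have h1 : 1 - δ ≤ ‖1 + a‖ := by
    have := norm_sub_norm_le (1 : ℂ) (-a)
    rw [norm_one, norm_neg, sub_neg_eq_add] at this
    linarith
  have : (3 / 2 : ℂ) = ((3 / 2 : ℝ) : ℂ) := by norm_num
  rw [this, Complex.norm_cpow_real]
  calc (1 - δ) ^ 2 = (1 - δ) ^ (2 : ℝ) := (Real.rpow_two _).symm
    _ ≤ (1 - δ) ^ (3 / 2 : ℝ) := Real.rpow_le_rpow_of_exponent_ge (by linarith)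
        (by linarith [(norm_nonneg a).trans ha]) (by norm_num)
    _ ≤ ‖1 + a‖ ^ (3 / 2 : ℝ) := by gcongr

end

noncomputable def Rc (t : ℝ) (z : ℂ) : ℂ :=
  Complex.exp (t * z / (1 + (1 + t * z ^ 2) ^ (1 / 2 : ℂ))) * ((1 + t * z ^ 2) ^ (1 / 2 : ℂ) - z) /
    ((1 - z) * (1 + t * z ^ 2) ^ (3 / 2 : ℂ))

theorem ofReal_Rt {t : ℝ} (ht : 0 ≤ t) (x : ℝ) : (Rt t x : ℂ) = Rc t x := by
  have hu : 0 ≤ 1 + t * x ^ 2 := by positivity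
  have hcast : (1 + t * (x : ℂ) ^ 2) = ((1 + t * x ^ 2 : ℝ) : ℂ) := by push_cast; ring
  rw [Rt, Rc, hcast, Real.sqrt_eq_rpow]
  push_cast [Complex.ofReal_cpow hu]
  ring_nf

section
variable {t : ℝ} {z : ℂ}

theorem norm_ofReal_mul_sq_le (ht : 6 ≤ t) (hz : ‖z‖ < 1 / (3 * t)) :
    ‖(t : ℂ) * z ^ 2‖ ≤ 1 / 54 := by
  have ht0 : 0 < t := by linarith
  rw [norm_mul, norm_pow, Complex.norm_real, Real.norm_of_nonneg ht0.le]
  calc t * ‖z‖ ^ 2 ≤ t * (1 / (3 * t)) ^ 2 := by gcongr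
    _ = 1 / (9 * t) := by field_simp; ring
    _ ≤ 1 / 54 := by gcongr; linarith

theorem norm_le_one_div_eighteen (ht : 6 ≤ t) (hz : ‖z‖ < 1 / (3 * t)) : ‖z‖ ≤ 1 / 18 :=
  hz.le.trans (by gcongr; linarith)

theorem differentiableAt_Rc (ht : 6 ≤ t) (hz : ‖z‖ < 1 / (3 * t)) :
    DifferentiableAt ℂ (Rc t) z := by
  have hsmall := norm_ofReal_mul_sq_le ht hz
  have hslit : 1 + (t : ℂ) * z ^ 2 ∈ Complex.slitPlane :=
    Complex.mem_slitPlane_of_norm_lt_one (by linarith)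
  have hz1 : (1 : ℂ) - z ≠ 0 := sub_ne_zero.2 <| ne_of_apply_ne norm <| by
    rw [norm_one]; linarith [norm_le_one_div_eighteen ht hz]
  have hpow : (1 + (t : ℂ) * z ^ 2) ^ (3 / 2 : ℂ) ≠ 0 :=
    (Complex.cpow_ne_zero_iff_of_exponent_ne_zero (by norm_num)).2 (Complex.slitPlane_ne_zero hslit)
  have hsqrt : 1 + (1 + (t : ℂ) * z ^ 2) ^ (1 / 2 : ℂ) ≠ 0 :=
    norm_pos_iff.1 (one_pos.trans_le (one_le_norm_one_add_cpow_one_half _))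
  have hden := mul_ne_zero hz1 hpow
  unfold Rc
  fun_prop (disch := assumption)

theorem norm_Rc_le_two (ht : 6 ≤ t) (hz : ‖z‖ < 1 / (3 * t)) : ‖Rc t z‖ ≤ 2 := by
  have hsmall := norm_ofReal_mul_sq_le ht hz
  have hz18 := norm_le_one_div_eighteen ht hz
  have htz : t * ‖z‖ ≤ 1 / 3 := by
    have := mul_lt_mul_of_pos_left hz (by linarith : 0 < t)
    rw [mul_one_div, div_mul_cancel_right₀ (by linarith)] at this
    linarith
  set C := (1 + (t : ℂ) * z ^ 2) ^ (1 / 2 : ℂ)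
  have hexp : ‖Complex.exp (t * z / (1 + C))‖ ≤ 3 / 2 := by
    have hq : ‖(t : ℂ) * z / (1 + C)‖ ≤ 1 / 3 := by
      rw [norm_div, norm_mul, Complex.norm_real, Real.norm_of_nonneg (by linarith)]
      exact (div_le_self (by positivity) (one_le_norm_one_add_cpow_one_half _)).trans htz
    rw [Complex.norm_exp]
    calc Real.exp _ ≤ Real.exp (1 / 3) := Real.exp_le_exp.2 ((Complex.re_le_norm _).trans hq)
      _ ≤ 3 / 2 := by
        have := Real.exp_bound_div_one_sub_of_interval' (x := 1 / 3) (by norm_num) (by norm_num)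
        norm_num at this ⊢
        linarith
  have hnum : ‖C - z‖ ≤ 1 + 1 / 54 + 1 / 18 :=
    (norm_sub_le _ _).trans (add_le_add (norm_one_add_cpow_one_half_le hsmall) hz18)
  have hden :
      (1 - 1 / 18) * (1 - 1 / 54) ^ 2 ≤ ‖1 - z‖ * ‖(1 + (t : ℂ) * z ^ 2) ^ (3 / 2 : ℂ)‖ := by
    have h1 : 1 - 1 / 18 ≤ ‖1 - z‖ := by
      have := norm_sub_norm_le (1 : ℂ) z
      rw [norm_one] at this
      linarith
    gcongr
    exact sq_le_norm_one_add_cpow_three_half hsmall (by norm_num)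
  rw [Rc, norm_div, norm_mul, norm_mul]
  calc _ ≤ (3 / 2 : ℝ) * (1 + 1 / 54 + 1 / 18) / ((1 - 1 / 18) * (1 - 1 / 54) ^ 2) := by gcongr
    _ ≤ 2 := by norm_num

end

theorem abs_iteratedDeriv_Rt_le {t w : ℝ} (ht : 6 ≤ t) (hw : |w| < 1 / (12 * t)) (m : ℕ) :
    |iteratedDeriv m (Rt t) w| ≤ m.factorial * 2 * (4 * t) ^ m := by
  have ht0 : 0 < t := by linarith
  set U := ball (0 : ℂ) (1 / (3 * t))
  have hdiff : DifferentiableOn ℂ (Rc t) U := fun z hz =>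
    (differentiableAt_Rc ht (mem_ball_zero_iff.1 hz)).differentiableWithinAt
  have hwU : (w : ℂ) ∈ U := by
    rw [mem_ball_zero_iff, Complex.norm_real, Real.norm_eq_abs]
    exact hw.trans (by gcongr; linarith)
  have hball : closedBall (w : ℂ) (1 / (4 * t)) ⊆ U := fun z hz => by
    rw [mem_closedBall, dist_eq_norm] at hz
    rw [mem_ball_zero_iff]
    calc ‖z‖ ≤ ‖z - w‖ + ‖(w : ℂ)‖ := norm_le_norm_sub_add _ _
      _ < 1 / (4 * t) + 1 / (12 * t) := by
        rw [Complex.norm_real, Real.norm_eq_abs]; exact add_lt_add_of_le_of_lt hz hw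
      _ = 1 / (3 * t) := by field_simp; norm_num
  have hcauchy := Complex.norm_iteratedDeriv_le_of_forall_mem_sphere_norm_le m (by positivity)
    (hdiff.diffContOnCl_ball hball)
    (fun z hz => norm_Rc_le_two ht (mem_ball_zero_iff.1 (hball (sphere_subset_closedBall hz))))
  rw [iteratedDeriv_eq_re_iteratedDeriv isOpen_ball hdiff
    (fun x _ => ofReal_Rt ht0.le x) m w hwU]
  calc _ ≤ ‖iteratedDeriv m (Rc t) w‖ := Complex.abs_re_le_norm _
    _ ≤ _ := hcauchy
    _ = _ := by rw [one_div, inv_pow, div_inv_eq_mul]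

theorem deriv_R_bound (d : ℕ) (hd : 1 ≤ d) (j : ℕ) (hj1 : 1 ≤ j) (hjd : j ≤ d)
    (t ε g : ℝ) (ht : t = cconst * j)
    (hε : ε = ((3 * d : ℝ)) ^ (-(12 * d : ℝ)) * ((50 * d : ℝ)) ^ (-(3 * (d : ℝ) ^ 2 / 2)))
    (hg : g = t * ε / (1 + Real.sqrt (1 + t * ε ^ 2)))
    (m : ℕ) (w : ℝ) (hw : w ∈ Set.Icc (0 : ℝ) ε) :
    |iteratedDeriv m (Rfun j) w| ≤
      (m.factorial : ℝ) * ((m + 3).choose 3 : ℝ) * Real.exp g *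
        (4 * Real.exp (2 * t * ε) * t) ^ m := by
  obtain ⟨hw0, hwε⟩ := hw
  change ε = eps d at hε
  have hj : (1 : ℝ) ≤ j := by exact_mod_cast hj1
  have hjd' : (j : ℝ) ≤ d := by exact_mod_cast hjd
  have ht6 : 6 ≤ t := by rw [ht]; nlinarith [six_le_cconst]
  have ht7 : t ≤ 7 * d := by rw [ht]; nlinarith [cconst_le_seven, six_le_cconst]
  have hε0 : 0 ≤ ε := hε ▸ eps_nonneg (by positivity)
  have htε : t * ε < 1 / 12 := by
    have := mul_eps_le (d := d) (by exact_mod_cast hd)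
    rw [← hε] at this
    nlinarith
  rw [Rfun_eq_Rt, ← ht]
  rcases m with _ | m
  · simpa [hg] using abs_Rt_le (by linarith) hw0 hwε (by nlinarith)
  have hw12 : |w| < 1 / (12 * t) := by
    rw [abs_of_nonneg hw0, lt_div_iff₀ (by linarith)]; nlinarith
  calc _ ≤ ((m + 1).factorial : ℝ) * 2 * 1 * (4 * 1 * t) ^ (m + 1) := by
        simpa using abs_iteratedDeriv_Rt_le ht6 hw12 (m + 1)
    _ ≤ _ := by
      gcongr
      · exact_mod_cast (show 2 ≤ (m + 1 + 3).choose 3 from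
          (by decide : 2 ≤ (4).choose 3).trans (Nat.choose_le_choose 3 (by omega)))
      · exact Real.one_le_exp (hg ▸ by positivity)
      · exact Real.one_le_exp (by positivity)
end

section
/- Let c := 2π²/3, let d be a positive integer, let 2 ≤ m ≤ d, and let i_1, …, i_{2m−2} be nonnegative integers with i_1 + ⋯ + i_{2m−2} = m(m−1). Then (√2/c)^{m(m−1)} · ∏_{k=1}^{2m−2} C(d, i_k) ≤ (e^{4e/c²})^{d²}. -/
/-!
Vandermonde's identity bounds the product of binomial coefficients by the single coefficient
`C((2m-2)d, m(m-1))`, and `k! ≥ (k/e)^k` bounds that by `(2ed/m)^{m(m-1)}`. Writing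
`y = (√2/c)(2ed/m)`, the left-hand side is at most `y^{m(m-1)}`, and the elementary inequality
`|y| ≤ exp(y²/(2e))` (tangent line of `exp` at `1`, applied at `y²/e`) turns this into
`exp(m(m-1) y²/(2e)) ≤ exp(4ed²/c²)`.
-/

open Real Finset

namespace Nat

theorem choose_mul_choose_le_add_choose_add (a b p q : ℕ) :
    a.choose p * b.choose q ≤ (a + b).choose (p + q) := by
  rw [add_choose_eq]
  exact single_le_sum (f := fun ij : ℕ × ℕ => a.choose ij.1 * b.choose ij.2)
    (fun _ _ => Nat.zero_le _) (a := (p, q)) (mem_antidiagonal.mpr rfl)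

theorem prod_choose_le_choose_sum {ι : Type*} (s : Finset ι) (n k : ι → ℕ) :
    ∏ j ∈ s, (n j).choose (k j) ≤ (∑ j ∈ s, n j).choose (∑ j ∈ s, k j) := by
  classical
  induction s using Finset.induction with
  | empty => simp
  | insert a s ha ih =>
    rw [prod_insert ha, sum_insert ha, sum_insert ha]
    exact (Nat.mul_le_mul_left _ ih).trans (choose_mul_choose_le_add_choose_add ..)

theorem choose_le_exp_one_mul_div_pow (n k : ℕ) :
    (n.choose k : ℝ) ≤ (exp 1 * n / k) ^ k := by
  rcases k.eq_zero_or_pos with rfl | hk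
  · simp
  have hkk : (k : ℝ) ^ k / exp 1 ^ k ≤ k ! := by
    have h := Real.pow_div_factorial_le_exp (x := k) (Nat.cast_nonneg k) k
    rw [← exp_one_pow, div_le_iff₀ (by positivity)] at h
    rw [div_le_iff₀ (by positivity)]
    linarith
  calc (n.choose k : ℝ) ≤ n ^ k / k ! := choose_le_pow_div k n
    _ ≤ n ^ k / (k ^ k / exp 1 ^ k) := div_le_div_of_nonneg_left (by positivity) (by positivity) hkk
    _ = (exp 1 * n / k) ^ k := by rw [div_pow, mul_pow, div_div_eq_mul_div]; ring

end Nat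

namespace Real

theorem abs_le_exp_sq_div (y : ℝ) : |y| ≤ exp (y ^ 2 / (2 * exp 1)) := by
  refine abs_le_of_sq_le_sq ?_ (exp_pos _).le
  have h := exp_one_mul_le_exp (x := y ^ 2 / exp 1)
  rw [mul_div_cancel₀ _ (exp_pos 1).ne'] at h
  calc y ^ 2 ≤ exp (y ^ 2 / exp 1) := h
    _ = exp (y ^ 2 / (2 * exp 1)) ^ 2 := by rw [← exp_nat_mul]; congr 1; push_cast; ring

theorem pow_le_exp_mul_sq_div (y : ℝ) (n : ℕ) : y ^ n ≤ exp (n * (y ^ 2 / (2 * exp 1))) :=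
  calc y ^ n ≤ |y| ^ n := (le_abs_self _).trans (abs_pow y n).le
    _ ≤ exp (y ^ 2 / (2 * exp 1)) ^ n := pow_le_pow_left₀ (abs_nonneg y) (abs_le_exp_sq_div y) n
    _ = exp (n * (y ^ 2 / (2 * exp 1))) := (exp_nat_mul _ n).symm

end Real

theorem sq_two_mul_sub_two_mul_le (m d : ℕ) :
    ((2 * m - 2) * d) ^ 2 ≤ 4 * d ^ 2 * (m * (m - 1)) := by
  rw [show 2 * m - 2 = 2 * (m - 1) by omega]
  calc (2 * (m - 1) * d) ^ 2 = 4 * d ^ 2 * ((m - 1) * (m - 1)) := by ring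
    _ ≤ 4 * d ^ 2 * (m * (m - 1)) := Nat.mul_le_mul_left _ (Nat.mul_le_mul_right _ (m.sub_le 1))

theorem mul_sq_div_two_exp_one_le (m d : ℕ) :
    (m * (m - 1) : ℕ) * ((√2 / cconst * (exp 1 * ((2 * m - 2) * d : ℕ) / (m * (m - 1) : ℕ))) ^ 2
      / (2 * exp 1)) ≤ d ^ 2 * (4 * exp 1 / cconst ^ 2) := by
  set S := m * (m - 1)
  set N := (2 * m - 2) * d
  have hratio : (N : ℝ) ^ 2 / S ≤ 4 * d ^ 2 :=
    div_le_of_le_mul₀ (by positivity) (by positivity) (by exact_mod_cast sq_two_mul_sub_two_mul_le m d)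
  calc S * ((√2 / cconst * (exp 1 * N / S)) ^ 2 / (2 * exp 1))
      = exp 1 / cconst ^ 2 * (N ^ 2 / S) := by
        rcases eq_or_ne (S : ℝ) 0 with hS | hS
        · simp [hS]
        · simp only [mul_pow, div_pow, sq_sqrt zero_le_two]
          field_simp
    _ ≤ exp 1 / cconst ^ 2 * (4 * d ^ 2) := mul_le_mul_of_nonneg_left hratio (by positivity)
    _ = d ^ 2 * (4 * exp 1 / cconst ^ 2) := by ring

theorem binom_product_bound_general (d m : ℕ)
    (i : Fin (2 * m - 2) → ℕ) (hisum : ∑ k, i k = m * (m - 1)) :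
    (Real.sqrt 2 / cconst) ^ (m * (m - 1)) * ∏ k, (d.choose (i k) : ℝ) ≤
      (Real.exp (4 * Real.exp 1 / cconst ^ 2)) ^ (d ^ 2) := by
  set S := m * (m - 1)
  set N := (2 * m - 2) * d
  set y := √2 / cconst * (exp 1 * N / S)
  have hprod : ∏ k, (d.choose (i k) : ℝ) ≤ N.choose S := by
    have h := Nat.prod_choose_le_choose_sum univ (fun _ => d) i
    rw [sum_const, card_univ, Fintype.card_fin, smul_eq_mul, hisum] at h
    exact_mod_cast h
  calc (√2 / cconst) ^ S * ∏ k, (d.choose (i k) : ℝ)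
      ≤ (√2 / cconst) ^ S * (exp 1 * N / S) ^ S := by
        gcongr
        · unfold cconst; positivity
        · exact hprod.trans (Nat.choose_le_exp_one_mul_div_pow N S)
    _ = y ^ S := (mul_pow ..).symm
    _ ≤ exp (S * (y ^ 2 / (2 * exp 1))) := pow_le_exp_mul_sq_div y S
    _ ≤ exp (d ^ 2 * (4 * exp 1 / cconst ^ 2)) := exp_le_exp.mpr (mul_sq_div_two_exp_one_le m d)
    _ = exp (4 * exp 1 / cconst ^ 2) ^ (d ^ 2) := by rw [← exp_nat_mul]; push_cast; rfl

theorem binom_product_bound (d m : ℕ) (hd : 1 ≤ d) (hm2 : 2 ≤ m) (hmd : m ≤ d)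
    (i : Fin (2 * m - 2) → ℕ) (hisum : ∑ k, i k = m * (m - 1)) :
    (Real.sqrt 2 / cconst) ^ (m * (m - 1)) * ∏ k, (d.choose (i k) : ℝ) ≤
      (Real.exp (4 * Real.exp 1 / cconst ^ 2)) ^ (d ^ 2) :=
  binom_product_bound_general d m i hisum
end

section
/- Let d ≥ 2, let λ_1, …, λ_d be the d (distinct, real) roots of the Hermite polynomial H_d(X). Then for every m with 2 ≤ m ≤ d, one has Σ_{1 ≤ i_1 < ⋯ < i_m ≤ d} ∏_{1 ≤ a < b ≤ m} (λ_{i_a} − λ_{i_b})² ≥ 1. -/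
/-- The Hermite polynomial `H_d(X) = ∑_{k ≤ d/2} (-1)^k d!/(k!(d-2k)!) X^(d-2k)`,
normalized by the generating function `e^{tX - t²} = ∑ H_d(X) t^d/d!`. -/
noncomputable def hermiteH (d : ℕ) : Polynomial ℝ :=
  ∑ k ∈ Finset.range (d / 2 + 1),
    Polynomial.C ((-1 : ℝ) ^ k * (d.factorial : ℝ) /
      ((k.factorial : ℝ) * ((d - 2 * k).factorial : ℝ))) * Polynomial.X ^ (d - 2 * k)

/-!
The sum `S` is a symmetric polynomial with integer coefficients in the roots `λᵢ`, so by the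
fundamental theorem on symmetric polynomials it is an integer polynomial in their elementary
symmetric functions. By Vieta these are, up to sign, the coefficients of the monic polynomial
`H_d`, which are integers. Hence `S ∈ ℤ`; since the roots are distinct, every summand is
positive, so `S > 0` and therefore `S ≥ 1`.
-/

open Finset

namespace Finset

theorem prod_sym2_filter_not_isDiag {ι M : Type*} [LinearOrder ι] [CommMonoid M]
    (s : Finset ι) (p : Sym2 ι → M) :
    ∏ i ∈ s.sym2 with ¬ i.IsDiag, p i = ∏ i ∈ s.offDiag with i.1 < i.2, p s(i.1, i.2) := by
  rw [offDiag_filter_lt_eq_filter_le]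
  conv_rhs => rw [← prod_subtype_eq_prod_filter]
  refine (prod_equiv Sym2.sortEquiv.symm ?_ ?_).symm
  all_goals aesop

end Finset

section Discriminant

variable {ι κ R S : Type*} [DecidableEq ι] [CommRing R]

/-- `∏_{a < b in s} (x a - x b) ^ 2`, taken over unordered pairs so that it needs no order on `ι`
and is visibly invariant under relabelling. -/
noncomputable def discrOn (x : ι → R) (s : Finset ι) : R :=
  ∏ z ∈ s.sym2 with ¬ z.IsDiag, Sym2.lift ⟨fun a b => (x a - x b) ^ 2, fun a b => by ring⟩ z

theorem map_discrOn {F : Type*} [CommRing S] [FunLike F R S] [RingHomClass F R S] (f : F)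
    (x : ι → R) (s : Finset ι) : f (discrOn x s) = discrOn (f ∘ x) s := by
  rw [discrOn, discrOn, map_prod]
  refine prod_congr rfl fun z _ => ?_
  induction z using Sym2.ind
  simp

theorem discrOn_map [DecidableEq κ] (x : κ → R) (e : ι ↪ κ) (s : Finset ι) :
    discrOn x (s.map e) = discrOn (x ∘ e) s := by
  rw [discrOn, discrOn, sym2_map, filter_map, prod_map]
  refine prod_congr ?_ fun z _ => ?_
  · ext z; simp [Sym2.isDiag_map e.injective]
  · induction z using Sym2.ind
    simp

theorem discrOn_eq_prod_lt [LinearOrder ι] (x : ι → R) (s : Finset ι) :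
    discrOn x s = ∏ q ∈ s.offDiag with q.1 < q.2, (x q.1 - x q.2) ^ 2 := by
  rw [discrOn]
  convert prod_sym2_filter_not_isDiag s _ using 2
  · ext; simp
  · rfl

theorem discrOn_pos [LinearOrder R] [IsStrictOrderedRing R] {x : ι → R} {s : Finset ι}
    (hx : Set.InjOn x s) : 0 < discrOn x s := by
  refine prod_pos fun z hz => ?_
  induction z using Sym2.ind with | _ a b => ?_
  simp only [mem_filter, mk_mem_sym2_iff, Sym2.mk_isDiag_iff] at hz
  exact sq_pos_of_ne_zero (sub_ne_zero.2 fun h => hz.2 (hx hz.1.1 hz.1.2 h))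

variable [Fintype ι]

noncomputable def discrSum (x : ι → R) (m : ℕ) : R :=
  ∑ s ∈ powersetCard m univ, discrOn x s

theorem map_discrSum {F : Type*} [CommRing S] [FunLike F R S] [RingHomClass F R S] (f : F)
    (x : ι → R) (m : ℕ) : f (discrSum x m) = discrSum (f ∘ x) m := by
  simp only [discrSum, map_sum, map_discrOn]

theorem discrSum_comp_equiv [Fintype κ] [DecidableEq κ] (x : κ → R) (e : ι ≃ κ) (m : ℕ) :
    discrSum (x ∘ e) m = discrSum x m := by
  rw [discrSum, discrSum, ← map_univ_equiv e, powersetCard_map, sum_map]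
  simp [discrOn_map]

theorem discrSum_pos [LinearOrder R] [IsStrictOrderedRing R] {x : ι → R}
    (hx : Function.Injective x) {m : ℕ} (hm : m ≤ Fintype.card ι) : 0 < discrSum x m :=
  sum_pos (fun s _ => discrOn_pos hx.injOn) (powersetCard_nonempty.2 (by simpa using hm))

theorem MvPolynomial.isSymmetric_discrSum_X (m : ℕ) :
    (discrSum (MvPolynomial.X : ι → MvPolynomial ι R) m).IsSymmetric := by
  intro e
  rw [map_discrSum, show ⇑(MvPolynomial.rename (R := R) e) ∘ MvPolynomial.X = MvPolynomial.X ∘ e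
    from _root_.funext fun i => MvPolynomial.rename_X e i, discrSum_comp_equiv]

end Discriminant

namespace MvPolynomial

theorem IsSymmetric.aeval_mem {σ R S : Type*} [Fintype σ] [CommRing R] [CommRing S] [Algebra R S]
    {P : MvPolynomial σ R} (hP : P.IsSymmetric) {A : Subalgebra R S} (x : σ → S)
    (hx : ∀ n, (univ.val.map x).esymm n ∈ A) : aeval x P ∈ A := by
  obtain ⟨Q, hQ⟩ := esymmAlgHom_surjective (σ := σ) (R := R) (n := Fintype.card σ) le_rfl ⟨P, hP⟩
  let e : Fin (Fintype.card σ) → S := fun i => (univ.val.map x).esymm (i + 1)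
  have hPQ : aeval x P = aeval e Q := by
    have hP' : P = aeval (fun i : Fin _ => esymm σ R (i + 1)) Q := by
      rw [← esymmAlgHom_apply, hQ]
    rw [hP', ← AlgHom.comp_apply, comp_aeval]
    simp only [aeval_esymm_eq_multiset_esymm, e]
  have hadjoin : aeval e Q ∈ Algebra.adjoin R (Set.range e) := by
    rw [Algebra.adjoin_range_eq_range_aeval]
    exact ⟨Q, rfl⟩
  exact hPQ ▸ Algebra.adjoin_le (Set.range_subset_iff.2 fun i => hx _) hadjoin

theorem discrSum_mem_of_esymm_mem {ι R S : Type*} [Fintype ι] [DecidableEq ι] [CommRing R]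
    [CommRing S] [Algebra R S] {A : Subalgebra R S} (x : ι → S)
    (hx : ∀ n, (univ.val.map x).esymm n ∈ A) (m : ℕ) : discrSum x m ∈ A := by
  have := (isSymmetric_discrSum_X (R := R) m).aeval_mem x hx
  rwa [map_discrSum, Function.comp_def, _root_.funext (aeval_X x)] at this

end MvPolynomial

namespace Polynomial

theorem Monic.esymm_roots_mem {R K : Type*} [CommRing R] [CommRing K] [IsDomain K] [Algebra R K]
    {A : Subalgebra R K} {p : K[X]} (hp : p.Monic) (hroots : Multiset.card p.roots = p.natDegree)
    (hA : ∀ k, p.coeff k ∈ A) (n : ℕ) : p.roots.esymm n ∈ A := by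
  rcases le_or_gt n p.natDegree with hn | hn
  · have hcoeff := coeff_eq_esymm_roots_of_card hroots (Nat.sub_le p.natDegree n)
    rw [Nat.sub_sub_self hn, hp.leadingCoeff, one_mul] at hcoeff
    have : p.roots.esymm n = (-1) ^ n * p.coeff (p.natDegree - n) := by
      rw [hcoeff, ← mul_assoc, ← pow_add, Even.neg_one_pow ⟨n, rfl⟩, one_mul]
    rw [this]
    exact A.mul_mem (A.pow_mem (A.neg_mem A.one_mem) n) (hA _)
  · rw [Multiset.esymm, Multiset.powersetCard_eq_empty _ (hroots ▸ hn)]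
    exact A.zero_mem

theorem roots_eq_map_univ_of_injective {K ι : Type*} [CommRing K] [IsDomain K] [Fintype ι]
    {p : K[X]} {x : ι → K} (hp : p ≠ 0) (hdeg : p.natDegree ≤ Fintype.card ι)
    (hx : Function.Injective x) (hroot : ∀ i, p.IsRoot (x i)) :
    p.roots = univ.val.map x := by
  have hle : univ.val.map x ≤ p.roots := by
    rw [Multiset.le_iff_subset (univ.nodup.map hx)]
    intro a ha
    obtain ⟨i, -, rfl⟩ := Multiset.mem_map.mp ha
    exact (mem_roots hp).2 (hroot i)
  refine (Multiset.eq_of_le_of_card_le hle ?_).symm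
  simpa using (card_roots' p).trans hdeg

end Polynomial

open Polynomial

theorem hermiteH_coeff_self (d : ℕ) : (hermiteH d).coeff d = 1 := by
  rw [hermiteH, finsetSum_coeff, sum_eq_single 0]
  · simp [Nat.factorial_ne_zero]
  · intro k hk hk0
    rw [mem_range] at hk
    rw [coeff_C_mul_X_pow, if_neg (by omega)]
  · simp

theorem hermiteH_natDegree_le (d : ℕ) : (hermiteH d).natDegree ≤ d :=
  natDegree_sum_le_of_forall_le _ _ fun _ _ => (natDegree_C_mul_X_pow_le _ _).trans (Nat.sub_le _ _)

theorem hermiteH_monic (d : ℕ) : (hermiteH d).Monic :=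
  monic_of_natDegree_le_of_coeff_eq_one d (hermiteH_natDegree_le d) (hermiteH_coeff_self d)

theorem hermiteH_coeff_mem_bot (d n : ℕ) : (hermiteH d).coeff n ∈ (⊥ : Subalgebra ℤ ℝ) := by
  rw [hermiteH, finsetSum_coeff]
  refine Subalgebra.sum_mem _ fun k hk => ?_
  rw [coeff_C_mul_X_pow]
  split_ifs
  · have hdvd : k.factorial * (d - 2 * k).factorial ∣ d.factorial :=
      (Nat.factorial_mul_factorial_dvd_factorial_add k (d - 2 * k)).trans
        (Nat.factorial_dvd_factorial (by rw [mem_range] at hk; omega))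
    rw [mul_div_assoc, ← Nat.cast_mul, ← Nat.cast_div hdvd (by positivity)]
    exact Subalgebra.mul_mem _ (Subalgebra.pow_mem _ (Subalgebra.neg_mem _ (Subalgebra.one_mem _)) _)
      (Subalgebra.natCast_mem _ _)
  · exact Subalgebra.zero_mem _

theorem hermite_hankel_ge_one_general (d : ℕ) (lam : Fin d → ℝ)
    (hinj : Function.Injective lam)
    (hroot : ∀ a : Fin d, (hermiteH d).eval (lam a) = 0)
    (m : ℕ) (hmd : m ≤ d) :
    1 ≤ ∑ s ∈ Finset.powersetCard m (Finset.univ : Finset (Fin d)),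
        ∏ q ∈ s.offDiag.filter (fun q => q.1 < q.2), (lam q.1 - lam q.2) ^ 2 := by
  have hroots : (hermiteH d).roots = univ.val.map lam :=
    roots_eq_map_univ_of_injective (hermiteH_monic d).ne_zero
      (by simpa using hermiteH_natDegree_le d) hinj hroot
  have hcard : Multiset.card (hermiteH d).roots = (hermiteH d).natDegree :=
    le_antisymm (card_roots' _) (by simpa [hroots] using hermiteH_natDegree_le d)
  have hesymm (n : ℕ) : (univ.val.map lam).esymm n ∈ (⊥ : Subalgebra ℤ ℝ) :=
    hroots ▸ (hermiteH_monic d).esymm_roots_mem hcard (hermiteH_coeff_mem_bot d) n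
  obtain ⟨z, hz⟩ := Algebra.mem_bot.1 (MvPolynomial.discrSum_mem_of_esymm_mem lam hesymm m)
  have hpos : 0 < discrSum lam m := discrSum_pos hinj (by simpa using hmd)
  have hsum : ∑ s ∈ powersetCard m univ, ∏ q ∈ s.offDiag with q.1 < q.2, (lam q.1 - lam q.2) ^ 2
      = discrSum lam m := by
    simp [discrSum, discrOn_eq_prod_lt]
  rw [hsum, ← hz, eq_intCast] at *
  exact_mod_cast (show (0 : ℤ) < z by exact_mod_cast hpos)

theorem hermite_hankel_ge_one (d : ℕ) (hd : 2 ≤ d) (lam : Fin d → ℝ)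
    (hinj : Function.Injective lam)
    (hroot : ∀ a : Fin d, (hermiteH d).eval (lam a) = 0)
    (m : ℕ) (hm2 : 2 ≤ m) (hmd : m ≤ d) :
    1 ≤ ∑ s ∈ Finset.powersetCard m (Finset.univ : Finset (Fin d)),
        ∏ q ∈ s.offDiag.filter (fun q => q.1 < q.2), (lam q.1 - lam q.2) ^ 2 :=
  hermite_hankel_ge_one_general d lam hinj hroot m hmd
end

section
/- Let t ≥ 1 be a real number. Then for every integer n ≥ 1 and every real w ≥ 0, the n-th derivative of w ↦ √(1 + t w²) satisfies |∂_w^n √(1 + t w²)| ≤ n! · e^{2tw} · t^n. -/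
/-!
On the real line `√(1 + y²) = (y - i)^{1/2} (y + i)^{1/2}`, and the `k`-th derivative of
`(y ± i)^{1/2}` is `k! c_k (y ± i)^{1/2 - k}` with `c_k = |(1/2 choose k)|`. Leibniz' rule
therefore bounds the `n`-th derivative of `√(1 + y²)` by
`n! (1 + y²)^{(1 - n)/2} ∑ c_i c_{n-i} ≤ n!`: the convolution is at most `1` because
`c_k ≤ 1/2` for `k ≥ 1` and the partial sums `∑_{k=1}^m c_k = 1 - 2(m+1) c_{m+1}` telescope.
Rescaling `y = √t x` gives the bound `n! t^{n/2} ≤ n! t^n`.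
-/

open Finset Complex Polynomial ComplexConjugate
open scoped Nat

/-- `|(1/2 choose k)|`. -/
noncomputable def sqrtCoeff (k : ℕ) : ℝ := |(descPochhammer ℝ k).eval (1 / 2)| / k !

lemma sqrtCoeff_zero : sqrtCoeff 0 = 1 := by simp [sqrtCoeff]

lemma sqrtCoeff_one : sqrtCoeff 1 = 1 / 2 := by norm_num [sqrtCoeff]

lemma sqrtCoeff_succ (k : ℕ) :
    sqrtCoeff (k + 1) * (k + 1) = sqrtCoeff k * |1 / 2 - (k : ℝ)| := by
  simp only [sqrtCoeff, descPochhammer_succ_eval, abs_mul, Nat.factorial_succ, Nat.cast_mul,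
    Nat.cast_succ]
  field_simp

lemma sqrtCoeff_nonneg (k : ℕ) : 0 ≤ sqrtCoeff k := by unfold sqrtCoeff; positivity

lemma sqrtCoeff_antitone : Antitone sqrtCoeff := by
  refine antitone_nat_of_succ_le fun k => le_of_mul_le_mul_right ?_ (k.cast_add_one_pos (α := ℝ))
  rw [sqrtCoeff_succ]
  have hk : |1 / 2 - (k : ℝ)| ≤ k + 1 :=
    abs_le.2 ⟨by linarith, by linarith [k.cast_nonneg (α := ℝ)]⟩
  exact mul_le_mul_of_nonneg_left hk (sqrtCoeff_nonneg k)

lemma sum_range_sqrtCoeff_succ (m : ℕ) :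
    ∑ k ∈ range m, sqrtCoeff (k + 1) = 1 - 2 * (m + 1) * sqrtCoeff (m + 1) := by
  induction m with
  | zero => norm_num [sqrtCoeff_one]
  | succ m ih =>
    have h := sqrtCoeff_succ (m + 1)
    rw [abs_of_nonpos (by push_cast; linarith)] at h
    rw [sum_range_succ, ih]
    push_cast at h ⊢
    linarith

lemma sum_range_sqrtCoeff_mul_sqrtCoeff_le_one (n : ℕ) :
    ∑ i ∈ range (n + 1), sqrtCoeff i * sqrtCoeff (n - i) ≤ 1 := by
  cases n with
  | zero => simp [sqrtCoeff_zero]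
  | succ m =>
    calc ∑ i ∈ range (m + 1 + 1), sqrtCoeff i * sqrtCoeff (m + 1 - i)
        = ∑ i ∈ range m, sqrtCoeff (i + 1) * sqrtCoeff (m - i) + 2 * sqrtCoeff (m + 1) := by
          rw [sum_range_succ', sum_range_succ]
          simp only [Nat.add_sub_add_right, Nat.sub_self, Nat.sub_zero, sqrtCoeff_zero]
          ring
      _ ≤ ∑ i ∈ range m, sqrtCoeff (i + 1) * sqrtCoeff 1 + 2 * sqrtCoeff (m + 1) := by
          gcongr with i hi
          · exact sqrtCoeff_nonneg _
          · exact sqrtCoeff_antitone (by simp at hi; omega)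
      _ = 1 / 2 + (1 - m) * sqrtCoeff (m + 1) := by
          rw [← sum_mul, sum_range_sqrtCoeff_succ, sqrtCoeff_one]
          ring
      _ ≤ 1 := by
          have hle : sqrtCoeff (m + 1) ≤ sqrtCoeff 1 := sqrtCoeff_antitone (by omega)
          rw [sqrtCoeff_one] at hle
          nlinarith [sqrtCoeff_nonneg (m + 1), m.cast_nonneg (α := ℝ)]

theorem iteratedDeriv_cpow_const (p : ℂ) (n : ℕ) {z : ℂ} (hz : z ∈ slitPlane) :
    iteratedDeriv n (fun y : ℂ => y ^ p) z = (descPochhammer ℂ n).eval p * z ^ (p - n) := by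
  induction n generalizing z with
  | zero => simp
  | succ n ih =>
    have hnhds : iteratedDeriv n (fun y : ℂ => y ^ p)
        =ᶠ[nhds z] fun y => (descPochhammer ℂ n).eval p * y ^ (p - n) :=
      Filter.eventually_of_mem (isOpen_slitPlane.mem_nhds hz) fun y hy => ih hy
    rw [iteratedDeriv_succ, hnhds.deriv_eq, deriv_const_mul_field, deriv_cpow_const hz,
      descPochhammer_succ_eval]
    push_cast
    ring_nf

theorem norm_iteratedDeriv_add_const_cpow_half (c : ℂ) (k : ℕ) {z : ℂ}
    (hz : z + c ∈ slitPlane) :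
    ‖iteratedDeriv k (fun y : ℂ => (y + c) ^ (1 / 2 : ℂ)) z‖ =
      k ! * sqrtCoeff k * ‖z + c‖ ^ ((1 : ℝ) / 2 - k) := by
  rw [congrFun (iteratedDeriv_comp_add_const k (fun y : ℂ => y ^ (1 / 2 : ℂ)) c) z,
    iteratedDeriv_cpow_const _ _ hz,
    norm_mul, norm_cpow_of_ne_zero (slitPlane_ne_zero hz)]
  have hcoe : (descPochhammer ℂ k).eval (1 / 2 : ℂ) =
      (((descPochhammer ℝ k).eval (1 / 2) : ℝ) : ℂ) := by
    simp [descPochhammer_eval_eq_prod_range]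
  rw [hcoe, norm_real, Real.norm_eq_abs, sqrtCoeff, mul_div_cancel₀ _ (by positivity)]
  simp

theorem analyticAt_add_const_cpow {c p z : ℂ} (hz : z + c ∈ slitPlane) :
    AnalyticAt ℂ (fun y : ℂ => (y + c) ^ p) z :=
  (analyticAt_id.add analyticAt_const).cpow analyticAt_const hz

theorem ofReal_add_mem_slitPlane {c : ℂ} (hc : c.im ≠ 0) (x : ℝ) :
    (x : ℂ) + c ∈ slitPlane :=
  mem_slitPlane_iff.2 (Or.inr (by simpa using hc))

noncomputable def complexSqrtOneAddSq (z : ℂ) : ℂ :=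
  (z - I) ^ (1 / 2 : ℂ) * (z + I) ^ (1 / 2 : ℂ)

theorem analyticAt_complexSqrtOneAddSq (x : ℝ) : AnalyticAt ℂ complexSqrtOneAddSq x := by
  unfold complexSqrtOneAddSq
  simp only [sub_eq_add_neg]
  exact (analyticAt_add_const_cpow (ofReal_add_mem_slitPlane (by simp) x)).mul
    (analyticAt_add_const_cpow (ofReal_add_mem_slitPlane (by simp) x))

theorem complexSqrtOneAddSq_ofReal (x : ℝ) : complexSqrtOneAddSq x = √(1 + x ^ 2) := by
  set v : ℂ := x + I
  have hconj : (x : ℂ) - I = conj v := by simp [v, sub_eq_add_neg]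
  have harg : v.arg ≠ Real.pi := fun h => by simpa [v] using (arg_eq_pi_iff.mp h).2
  have hsq : (v ^ (1 / 2 : ℂ)) ^ 2 = v := by rw [one_div, cpow_ofNat_inv_pow]
  have hv : ‖v‖ = √(1 + x ^ 2) := by
    rw [norm_def, normSq_apply]; congr 1; simp [v]; ring
  rw [complexSqrtOneAddSq, hconj, conj_cpow v _ harg, map_div₀, map_one, map_ofNat,
    ← normSq_eq_conj_mul_self, normSq_eq_norm_sq, ← norm_pow, hsq, hv]

theorem norm_iteratedDeriv_complexSqrtOneAddSq_le {n : ℕ} (hn : 1 ≤ n) (x : ℝ) :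
    ‖iteratedDeriv n complexSqrtOneAddSq x‖ ≤ n ! := by
  have h₁ := ofReal_add_mem_slitPlane (c := -I) (by simp) x
  have h₂ := ofReal_add_mem_slitPlane (c := I) (by simp) x
  set d := ‖(x : ℂ) + I‖
  have hd : ‖(x : ℂ) + -I‖ = d := by
    rw [← norm_conj]; simp [d]
  have hd1 : 1 ≤ d := by simpa using abs_im_le_norm ((x : ℂ) + I)
  have hterm : ∀ i ∈ range (n + 1),
      ‖(n.choose i : ℂ) * iteratedDeriv i (fun y : ℂ => (y + -I) ^ (1 / 2 : ℂ)) x *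
        iteratedDeriv (n - i) (fun y : ℂ => (y + I) ^ (1 / 2 : ℂ)) x‖ =
      n ! * (sqrtCoeff i * sqrtCoeff (n - i)) * d ^ ((1 : ℝ) - n) := by
    intro i hi
    have hin : i ≤ n := Nat.lt_succ_iff.mp (mem_range.mp hi)
    rw [norm_mul, norm_mul, norm_iteratedDeriv_add_const_cpow_half _ _ h₁,
      norm_iteratedDeriv_add_const_cpow_half _ _ h₂, hd, norm_natCast]
    have hexp :
        d ^ ((1 : ℝ) / 2 - i) * d ^ ((1 : ℝ) / 2 - (n - i : ℕ)) = d ^ ((1 : ℝ) - n) := by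
      rw [← Real.rpow_add (by linarith), Nat.cast_sub hin]; ring_nf
    have hfac : (n.choose i : ℝ) * i ! * (n - i)! = n ! := by
      exact_mod_cast Nat.choose_mul_factorial_mul_factorial hin
    linear_combination (sqrtCoeff i * sqrtCoeff (n - i) * d ^ ((1 : ℝ) / 2 - i) *
      d ^ ((1 : ℝ) / 2 - (n - i : ℕ))) * hfac + (n ! * (sqrtCoeff i * sqrtCoeff (n - i))) * hexp
  have hd_pow : d ^ ((1 : ℝ) - n) ≤ 1 :=
    Real.rpow_le_one_of_one_le_of_nonpos hd1 (by simp [hn])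
  unfold complexSqrtOneAddSq
  simp only [sub_eq_add_neg]
  rw [iteratedDeriv_fun_mul (analyticAt_add_const_cpow h₁).contDiffAt
    (analyticAt_add_const_cpow h₂).contDiffAt]
  calc _ ≤ _ := norm_sum_le _ _
    _ = n ! * (∑ i ∈ range (n + 1), sqrtCoeff i * sqrtCoeff (n - i)) * d ^ ((1 : ℝ) - n) := by
      rw [sum_congr rfl hterm, mul_sum, sum_mul]
    _ ≤ n ! * 1 * 1 := by
      gcongr
      exact sum_range_sqrtCoeff_mul_sqrtCoeff_le_one n
    _ = n ! := by ring

theorem iteratedDeriv_eq_re_iteratedDeriv_of_ofReal {f : ℝ → ℝ} {F : ℂ → ℂ}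
    (hF : ∀ x : ℝ, AnalyticAt ℂ F x) (hfF : ∀ x : ℝ, F x = f x) (n : ℕ) (x : ℝ) :
    iteratedDeriv n f x = (iteratedDeriv n F x).re := by
  induction n generalizing x with
  | zero => simp [hfF]
  | succ n ih =>
    have hd : HasDerivAt (iteratedDeriv n F) (deriv (iteratedDeriv n F) x) x := by
      rw [iteratedDeriv_eq_iterate]
      exact ((hF x).iterated_deriv n).differentiableAt.hasDerivAt
    rw [iteratedDeriv_succ, iteratedDeriv_succ, funext ih, hd.real_of_complex.deriv]

theorem abs_iteratedDeriv_sqrt_one_add_sq_le {n : ℕ} (hn : 1 ≤ n) (x : ℝ) :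
    |iteratedDeriv n (fun y : ℝ => √(1 + y ^ 2)) x| ≤ n ! := by
  rw [iteratedDeriv_eq_re_iteratedDeriv_of_ofReal analyticAt_complexSqrtOneAddSq
    complexSqrtOneAddSq_ofReal]
  exact (abs_re_le_norm _).trans (norm_iteratedDeriv_complexSqrtOneAddSq_le hn x)

theorem abs_iteratedDeriv_sqrt_one_add_mul_sq_le {t : ℝ} (ht : 0 ≤ t) {n : ℕ} (hn : 1 ≤ n)
    (x : ℝ) : |iteratedDeriv n (fun y : ℝ => √(1 + t * y ^ 2)) x| ≤ n ! * √t ^ n := by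
  have hcomp : (fun y : ℝ => √(1 + t * y ^ 2)) = fun y => √(1 + (√t * y) ^ 2) := by
    simp [mul_pow, Real.sq_sqrt ht]
  have hsmooth : ContDiff ℝ n fun y : ℝ => √(1 + y ^ 2) :=
    (contDiff_const.add (contDiff_id.pow 2)).sqrt fun y => by positivity
  rw [hcomp, iteratedDeriv_comp_const_mul hsmooth, abs_mul, abs_pow,
    abs_of_nonneg (Real.sqrt_nonneg t), mul_comm]
  exact mul_le_mul_of_nonneg_right (abs_iteratedDeriv_sqrt_one_add_sq_le hn _) (by positivity)

theorem deriv_sqrt_bound (t : ℝ) (ht : 1 ≤ t) (n : ℕ) (hn : 1 ≤ n) (w : ℝ) (hw : 0 ≤ w) :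
    |iteratedDeriv n (fun x : ℝ => Real.sqrt (1 + t * x ^ 2)) w| ≤
      (n.factorial : ℝ) * Real.exp (2 * t * w) * t ^ n := by
  have hsqrt : √t ≤ t := (Real.sqrt_le_left (by linarith)).2 (by nlinarith)
  have hexp : 1 ≤ Real.exp (2 * t * w) := Real.one_le_exp (by positivity)
  calc _ ≤ n ! * √t ^ n := abs_iteratedDeriv_sqrt_one_add_mul_sq_le (by linarith) hn w
    _ ≤ n ! * 1 * t ^ n := by gcongr; simp
    _ ≤ n ! * Real.exp (2 * t * w) * t ^ n := by gcongr
end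

section
/- Let t ≥ 1 be a real number. Then for every integer n ≥ 0 and every real w with 0 ≤ w and tw ≤ 1, the n-th derivative of the function A(w) := exp( tw/(1 + √(1 + t w²)) ) satisfies |∂_w^n A(w)| ≤ n! · e^{g(w)} · (4 e^{2tw} t)^n, where g(w) := tw/(1 + √(1 + t w²)). -/
/-!
The function extends holomorphically to `z ↦ exp (t z / (1 + √(1 + t z²)))` with the principal
branch of the square root. On the closed disc of radius `1 / (2t)` about `w` the quantity
`1 + t z²` stays in the right half-plane, and the principal root has nonnegative real part, so the
denominator has modulus at least `1` and the extension is bounded by `exp (t |z|) ≤ exp (t w + 1/2)`.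
Cauchy's estimate then bounds the `n`-th derivative at `w` by `n! · exp (t w + 1/2) · (2t)ⁿ`, and
this is dominated by the claimed bound for `n ≥ 1`; the case `n = 0` is an equality.
-/

open Complex Metric

theorem iteratedDeriv_re_comp_ofReal {F : ℂ → ℂ} {U : Set ℂ} (hU : IsOpen U)
    (hF : DifferentiableOn ℂ F U) (n : ℕ) {x : ℝ} (hx : (x : ℂ) ∈ U) :
    iteratedDeriv n (fun y : ℝ => (F y).re) x = (iteratedDeriv n F x).re := by
  induction n generalizing x with
  | zero => simp
  | succ n ih =>
    have hderiv : HasDerivAt (fun y : ℝ => (iteratedDeriv n F y).re)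
        (iteratedDeriv (n + 1) F x).re x := by
      rw [iteratedDeriv_succ]
      refine HasDerivAt.real_of_complex (DifferentiableAt.hasDerivAt ?_)
      rw [iteratedDeriv_eq_iterate]
      exact ((hF.analyticOnNhd hU).iterated_deriv n x hx).differentiableAt
    have hU' : IsOpen {y : ℝ | (y : ℂ) ∈ U} := hU.preimage continuous_ofReal
    have heq : iteratedDeriv n (fun y : ℝ => (F y).re) =ᶠ[nhds x]
        fun y : ℝ => (iteratedDeriv n F y).re :=
      Filter.eventually_of_mem (hU'.mem_nhds hx) fun y hy => ih hy
    rw [iteratedDeriv_succ, heq.deriv_eq, hderiv.deriv]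

noncomputable def principalSqrt (u : ℂ) : ℂ := cexp (log u / 2)

theorem principalSqrt_ofReal {x : ℝ} (hx : 0 < x) : principalSqrt x = Real.sqrt x := by
  rw [principalSqrt, ← ofReal_log hx.le, ← ofReal_ofNat, ← ofReal_div, ← ofReal_exp,
    Real.sqrt_eq_rpow, Real.rpow_def_of_pos hx, div_eq_mul_one_div]

-- `arg u ∈ (-π, π]`, so the argument of the root lies in `[-π/2, π/2]`.
theorem re_principalSqrt_nonneg (u : ℂ) : 0 ≤ (principalSqrt u).re := by
  rw [principalSqrt, exp_re]
  refine mul_nonneg (Real.exp_pos _).le (Real.cos_nonneg_of_mem_Icc ⟨?_, ?_⟩)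
  all_goals
    rw [show (log u / 2).im = u.arg / 2 by simp [log_im]]
    linarith [neg_pi_lt_arg u, arg_le_pi u]

theorem one_le_norm_one_add_principalSqrt (u : ℂ) : 1 ≤ ‖1 + principalSqrt u‖ :=
  calc 1 ≤ (1 + principalSqrt u).re := by
        rw [add_re, one_re]; linarith [re_principalSqrt_nonneg u]
    _ ≤ _ := re_le_norm _

theorem differentiableAt_principalSqrt {u : ℂ} (hu : u ∈ slitPlane) :
    DifferentiableAt ℂ principalSqrt u :=
  ((differentiableAt_log hu).div_const 2).cexp

theorem re_one_add_mul_sq_pos {t : ℝ} {z : ℂ} (ht : 0 ≤ t) (h : t * z.im ^ 2 < 1) :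
    0 < (1 + t * z ^ 2).re := by
  have : (1 + t * z ^ 2).re = 1 + t * z.re ^ 2 - t * z.im ^ 2 := by
    simp [sq]; ring
  rw [this]
  nlinarith [mul_nonneg ht (sq_nonneg z.re)]

noncomputable def expPart (t : ℝ) (z : ℂ) : ℂ := cexp (t * z / (1 + principalSqrt (1 + t * z ^ 2)))

theorem expPart_ofReal {t : ℝ} (ht : 0 ≤ t) (x : ℝ) :
    expPart t x = Real.exp (t * x / (1 + Real.sqrt (1 + t * x ^ 2))) := by
  have hpos : 0 < 1 + t * x ^ 2 := by positivity
  have hcast : (1 + t * x ^ 2 : ℂ) = ((1 + t * x ^ 2 : ℝ) : ℂ) := by push_cast; ring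
  rw [expPart, hcast, principalSqrt_ofReal hpos]
  push_cast
  rfl

theorem norm_expPart_le {t : ℝ} (ht : 0 ≤ t) (z : ℂ) : ‖expPart t z‖ ≤ Real.exp (t * ‖z‖) := by
  rw [expPart, norm_exp, Real.exp_le_exp]
  refine (re_le_norm _).trans ?_
  rw [norm_div, norm_mul, norm_real, Real.norm_of_nonneg ht]
  exact div_le_self (by positivity) (one_le_norm_one_add_principalSqrt _)

theorem differentiableOn_expPart (t : ℝ) :
    DifferentiableOn ℂ (expPart t) {z : ℂ | 0 < (1 + t * z ^ 2).re} := by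
  intro z hz
  have hsqrt : DifferentiableAt ℂ (fun z : ℂ => principalSqrt (1 + t * z ^ 2)) z :=
    (differentiableAt_principalSqrt (Or.inl hz)).comp (g := principalSqrt) z (by fun_prop)
  have hne : 1 + principalSqrt (1 + t * z ^ 2) ≠ 0 := by
    rw [← norm_pos_iff]; linarith [one_le_norm_one_add_principalSqrt (1 + t * z ^ 2)]
  exact ((differentiableAt_const _).mul differentiableAt_id |>.div (hsqrt.const_add 1)
    hne).cexp.differentiableWithinAt

theorem closedBall_ofReal_subset_setOf_re_pos {t r : ℝ} (ht : 0 ≤ t) (hr : t * r ^ 2 < 1)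
    (w : ℝ) : closedBall (w : ℂ) r ⊆ {z : ℂ | 0 < (1 + t * z ^ 2).re} := by
  intro z hz
  refine re_one_add_mul_sq_pos ht ?_
  have him : |z.im| ≤ r := by
    simpa using (abs_im_le_norm (z - w)).trans (mem_closedBall_iff_norm.mp hz)
  calc t * z.im ^ 2 ≤ t * r ^ 2 :=
        mul_le_mul_of_nonneg_left (sq_le_sq.mpr (him.trans (le_abs_self r))) ht
    _ < 1 := hr

theorem norm_iteratedDeriv_expPart_le {t w : ℝ} (ht : 1 ≤ t) (hw : 0 ≤ w) (n : ℕ) :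
    ‖iteratedDeriv n (expPart t) w‖ ≤ n.factorial * (Real.exp (t * w + 1 / 2) * (2 * t) ^ n) := by
  have ht0 : 0 ≤ t := by linarith
  set r : ℝ := 1 / (2 * t) with hr_def
  have hr : 0 < r := by positivity
  have hball := closedBall_ofReal_subset_setOf_re_pos ht0 (r := r)
    (by rw [hr_def]; field_simp; nlinarith) w
  have hsphere : ∀ z ∈ sphere (w : ℂ) r, ‖expPart t z‖ ≤ Real.exp (t * w + 1 / 2) := by
    intro z hz
    have hz_norm : ‖z‖ ≤ w + r := by
      calc ‖z‖ ≤ ‖(w : ℂ)‖ + ‖z - w‖ := norm_le_insert' z w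
        _ = w + r := by rw [norm_real, Real.norm_of_nonneg hw, mem_sphere_iff_norm.mp hz]
    refine (norm_expPart_le ht0 z).trans (Real.exp_le_exp.mpr ?_)
    calc t * ‖z‖ ≤ t * (w + r) := by gcongr
      _ = t * w + 1 / 2 := by rw [hr_def]; field_simp
  calc ‖iteratedDeriv n (expPart t) w‖ ≤ n.factorial * Real.exp (t * w + 1 / 2) / r ^ n :=
        norm_iteratedDeriv_le_of_forall_mem_sphere_norm_le n hr
          ((differentiableOn_expPart t).diffContOnCl_ball hball) hsphere
    _ = n.factorial * (Real.exp (t * w + 1 / 2) * (2 * t) ^ n) := by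
        rw [hr_def, one_div_pow, div_div_eq_mul_div, div_one, mul_assoc]

theorem exp_add_half_mul_pow_le {a g t : ℝ} {n : ℕ} (ha : 0 ≤ a) (hg : 0 ≤ g) (ht : 0 ≤ t)
    (hn : n ≠ 0) :
    Real.exp (a + 1 / 2) * (2 * t) ^ n ≤ Real.exp g * (4 * Real.exp (2 * a) * t) ^ n := by
  have hhalf : Real.exp (1 / 2) ≤ 2 := by
    rw [Real.exp_half, Real.sqrt_le_iff]
    constructor <;> linarith [Real.exp_one_lt_d9]
  have hE : 1 ≤ 2 * Real.exp (2 * a) := by linarith [Real.one_le_exp (by linarith : 0 ≤ 2 * a)]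
  calc Real.exp (a + 1 / 2) * (2 * t) ^ n
      ≤ 2 * Real.exp (2 * a) * (2 * t) ^ n := by
        rw [Real.exp_add, mul_comm (Real.exp a)]
        gcongr
        linarith
    _ ≤ (2 * Real.exp (2 * a)) ^ n * (2 * t) ^ n := by gcongr; exact le_self_pow₀ hE hn
    _ ≤ Real.exp g * ((2 * Real.exp (2 * a)) ^ n * (2 * t) ^ n) :=
        le_mul_of_one_le_left (by positivity) (Real.one_le_exp hg)
    _ = Real.exp g * (4 * Real.exp (2 * a) * t) ^ n := by rw [← mul_pow]; ring_nf

theorem deriv_exp_part_bound_general (t : ℝ) (ht : 1 ≤ t) (n : ℕ) (w : ℝ) (hw0 : 0 ≤ w) :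
    |iteratedDeriv n
        (fun x : ℝ => Real.exp (t * x / (1 + Real.sqrt (1 + t * x ^ 2)))) w| ≤
      (n.factorial : ℝ) * Real.exp (t * w / (1 + Real.sqrt (1 + t * w ^ 2))) *
        (4 * Real.exp (2 * t * w) * t) ^ n := by
  have ht0 : 0 ≤ t := by linarith
  rcases Nat.eq_zero_or_pos n with rfl | hn
  · simp [abs_of_pos (Real.exp_pos _)]
  have hreal : (fun x : ℝ => Real.exp (t * x / (1 + Real.sqrt (1 + t * x ^ 2)))) =
      fun x : ℝ => (expPart t x).re := by
    funext x; rw [expPart_ofReal ht0, ofReal_re]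
  have hU : IsOpen {z : ℂ | 0 < (1 + t * z ^ 2).re} := isOpen_lt continuous_const (by fun_prop)
  have hw : (w : ℂ) ∈ {z : ℂ | 0 < (1 + t * z ^ 2).re} := re_one_add_mul_sq_pos ht0 (by simp)
  rw [hreal, iteratedDeriv_re_comp_ofReal hU (differentiableOn_expPart t) n hw]
  calc |(iteratedDeriv n (expPart t) w).re| ≤ ‖iteratedDeriv n (expPart t) w‖ := abs_re_le_norm _
    _ ≤ n.factorial * (Real.exp (t * w + 1 / 2) * (2 * t) ^ n) :=
        norm_iteratedDeriv_expPart_le ht hw0 n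
    _ ≤ n.factorial * (Real.exp (t * w / (1 + Real.sqrt (1 + t * w ^ 2))) *
          (4 * Real.exp (2 * (t * w)) * t) ^ n) :=
        mul_le_mul_of_nonneg_left
          (exp_add_half_mul_pow_le (by positivity) (by positivity) ht0 hn.ne') (Nat.cast_nonneg _)
    _ = _ := by ring_nf

theorem deriv_exp_part_bound (t : ℝ) (ht : 1 ≤ t) (n : ℕ) (w : ℝ) (hw0 : 0 ≤ w)
    (hw1 : t * w ≤ 1) :
    |iteratedDeriv n
        (fun x : ℝ => Real.exp (t * x / (1 + Real.sqrt (1 + t * x ^ 2)))) w| ≤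
      (n.factorial : ℝ) * Real.exp (t * w / (1 + Real.sqrt (1 + t * w ^ 2))) *
        (4 * Real.exp (2 * t * w) * t) ^ n :=
  deriv_exp_part_bound_general t ht n w hw0
end

section
/- Let t ≥ 1 be a real number. Then for every integer n ≥ 0 and every real w ≥ 0, the n-th derivative of the function D(w) := (1 + t w²)^{−3/2} satisfies |∂_w^n D(w)| ≤ n! · (2 e^{2tw} t)^n. -/
/-!
Write `u = 1 + t x²` and `D = u ^ (-3/2)`, so that `u D' = -3 t x D`. Differentiating this
identity gives the three-term recurrence
`u D⁽ⁿ⁺²⁾ = -(2n + 5) t x D⁽ⁿ⁺¹⁾ - (n + 1)(n + 3) t D⁽ⁿ⁾`.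
Since `u ≥ 1`, at `x = w ≥ 0` it bounds `|D⁽ⁿ⁺²⁾(w)|` by the two previous derivatives, and
induction gives `|D⁽ⁿ⁾(w)| ≤ n! cⁿ` for every `c ≥ 2t(1 + 2tw)`, e.g. `c = 2 t e^{2tw}`.
-/

open Nat
open scoped ContDiff

theorem hasDerivAt_one_add_mul_sq (t x : ℝ) :
    HasDerivAt (fun y : ℝ => 1 + t * y ^ 2) (2 * t * x) x := by
  simpa using ((hasDerivAt_pow 2 x).const_mul t).const_add 1 |>.congr_deriv (by ring)

theorem mul_deriv_deriv_eq_of_mul_deriv_eq {t a : ℝ} {F H : ℝ → ℝ} (hF : Differentiable ℝ F)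
    (hF' : Differentiable ℝ (deriv F)) (hH : Differentiable ℝ H)
    (h : ∀ x, (1 + t * x ^ 2) * deriv F x = a * x * F x + H x) (x : ℝ) :
    (1 + t * x ^ 2) * deriv (deriv F) x
      = (a - 2 * t) * x * deriv F x + a * F x + deriv H x := by
  have hl : HasDerivAt (fun y => a * y) a x := by simpa using (hasDerivAt_id x).const_mul a
  have hL : HasDerivAt (fun y => (1 + t * y ^ 2) * deriv F y) _ x :=
    (hasDerivAt_one_add_mul_sq t x).mul (hF' x).hasDerivAt
  have hR : HasDerivAt (fun y => a * y * F y + H y) _ x :=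
    (hl.mul (hF x).hasDerivAt).add (hH x).hasDerivAt
  rw [funext h] at hL
  linarith [hL.unique hR]

theorem mul_iteratedDeriv_add_two_eq {f : ℝ → ℝ} {t a : ℝ} (hf : ContDiff ℝ ∞ f)
    (hode : ∀ x, (1 + t * x ^ 2) * deriv f x = a * x * f x) (n : ℕ) (x : ℝ) :
    (1 + t * x ^ 2) * iteratedDeriv (n + 2) f x
      = (a - 2 * (n + 1) * t) * x * iteratedDeriv (n + 1) f x
        + (n + 1) * (a - n * t) * iteratedDeriv n f x := by
  have hdiff (m : ℕ) : Differentiable ℝ (iteratedDeriv m f) :=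
    hf.differentiable_iteratedDeriv m (mod_cast WithTop.coe_lt_top _)
  induction n generalizing x with
  | zero =>
    have := mul_deriv_deriv_eq_of_mul_deriv_eq (H := fun _ => 0) (by simpa using hdiff 0)
      (by simpa using hdiff 1) (differentiable_const 0) (by simpa using hode) x
    simp only [iteratedDeriv_succ, iteratedDeriv_zero, deriv_const] at this ⊢
    push_cast
    linarith
  | succ n ih =>
    have := mul_deriv_deriv_eq_of_mul_deriv_eq (a := a - 2 * (n + 1) * t) (hdiff (n + 1))
      (by simpa [← iteratedDeriv_succ] using hdiff (n + 2))
      ((hdiff n).const_mul ((n + 1) * (a - n * t))) (by simpa [← iteratedDeriv_succ] using ih) x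
    simp only [← iteratedDeriv_succ, deriv_const_mul_field'] at this
    rw [this]
    push_cast
    ring

theorem le_factorial_mul_pow_of_le_two_step {a p q : ℕ → ℝ} {c : ℝ} (hc : 0 ≤ c)
    (hp : ∀ m, 0 ≤ p m) (hq : ∀ m, 0 ≤ q m) (h0 : a 0 ≤ 1) (h1 : a 1 ≤ c)
    (hrec : ∀ m, a (m + 2) ≤ p m * a (m + 1) + q m * a m)
    (hpq : ∀ m : ℕ, (m + 1) * p m * c + q m ≤ (m + 2) * (m + 1) * c ^ 2) (n : ℕ) :
    a n ≤ n ! * c ^ n := by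
  induction n using Nat.twoStepInduction with
  | zero => simpa using h0
  | one => simpa using h1
  | more m ih₀ ih₁ =>
    calc a (m + 2) ≤ p m * ((m + 1)! * c ^ (m + 1)) + q m * (m ! * c ^ m) := by
          grw [hrec m, ih₀, ih₁] <;> simp [hp m, hq m]
      _ = m ! * c ^ m * ((m + 1) * p m * c + q m) := by push_cast [Nat.factorial_succ]; ring
      _ ≤ m ! * c ^ m * ((m + 2) * (m + 1) * c ^ 2) := by gcongr; exact hpq m
      _ = (m + 2)! * c ^ (m + 2) := by push_cast [Nat.factorial_succ]; ring

theorem contDiff_one_add_mul_sq_rpow {t : ℝ} (ht : 0 ≤ t) (r : ℝ) :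
    ContDiff ℝ ∞ fun x : ℝ => (1 + t * x ^ 2) ^ r :=
  (by fun_prop : ContDiff ℝ ∞ fun x : ℝ => 1 + t * x ^ 2).rpow_const_of_ne
    fun x => by positivity

theorem mul_deriv_one_add_mul_sq_rpow {t : ℝ} (ht : 0 ≤ t) (r x : ℝ) :
    (1 + t * x ^ 2) * deriv (fun x : ℝ => (1 + t * x ^ 2) ^ r) x
      = 2 * r * t * x * (1 + t * x ^ 2) ^ r := by
  have hu : 0 < 1 + t * x ^ 2 := by positivity
  rw [((hasDerivAt_one_add_mul_sq t x).rpow_const (Or.inl hu.ne')).deriv, Real.rpow_sub_one hu.ne']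
  field_simp

theorem recurrence_coeffs_le_of_two_mul_one_add_le {t w c : ℝ} (ht : 1 ≤ t) (hw : 0 ≤ w)
    (hc : 2 * t * (1 + 2 * t * w) ≤ c) (m : ℕ) :
    (m + 1) * ((2 * m + 5) * t * w) * c + (m + 1) * (m + 3) * t ≤ (m + 2) * (m + 1) * c ^ 2 := by
  have htw : 0 ≤ t * w := mul_nonneg (by linarith) hw
  have hc₂ : 2 ≤ c := by nlinarith
  have key : (2 * m + 5) * t * w * c + (m + 3) * t ≤ (m + 2) * c ^ 2 := by
    nlinarith [mul_le_mul_of_nonneg_left hc (by positivity : 0 ≤ (m + 2) * c),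
      mul_nonneg (by nlinarith : 0 ≤ 4 * (m + 2) * t - (2 * m + 5))
        (mul_nonneg htw (by linarith : 0 ≤ c)),
      mul_nonneg (by linarith : 0 ≤ t) (by nlinarith : 0 ≤ 2 * (m + 2) * c - (m + 3))]
  nlinarith

theorem abs_iteratedDeriv_one_add_mul_sq_rpow_le {t w c : ℝ} (ht : 1 ≤ t) (hw : 0 ≤ w)
    (hc : 2 * t * (1 + 2 * t * w) ≤ c) (n : ℕ) :
    |iteratedDeriv n (fun x : ℝ => (1 + t * x ^ 2) ^ (-(3 : ℝ) / 2)) w| ≤ n ! * c ^ n := by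
  set f := fun x : ℝ => (1 + t * x ^ 2) ^ (-(3 : ℝ) / 2)
  have ht₀ : 0 ≤ t := by linarith
  have htw : 0 ≤ t * w := mul_nonneg ht₀ hw
  have hf : ContDiff ℝ ∞ f := contDiff_one_add_mul_sq_rpow ht₀ _
  have hode (x : ℝ) : (1 + t * x ^ 2) * deriv f x = -3 * t * x * f x := by
    rw [mul_deriv_one_add_mul_sq_rpow ht₀]; ring
  have hu : 1 ≤ 1 + t * w ^ 2 := le_add_of_nonneg_right (by positivity)
  have habs (X : ℝ) : |X| ≤ |(1 + t * w ^ 2) * X| := by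
    rw [abs_mul, abs_of_pos (show 0 < 1 + t * w ^ 2 by linarith)]
    exact le_mul_of_one_le_left (abs_nonneg X) hu
  have h0 : |f w| ≤ 1 := by
    rw [abs_of_nonneg (by positivity)]
    exact Real.rpow_le_one_of_one_le_of_nonpos hu (by norm_num)
  refine le_factorial_mul_pow_of_le_two_step (a := fun m => |iteratedDeriv m f w|)
    (p := fun m => (2 * m + 5) * t * w) (q := fun m => (m + 1) * (m + 3) * t)
    (by nlinarith) (fun m => by positivity) (fun m => by positivity) (by simpa using h0) ?_
    (fun m => ?_) (fun m => ?_) n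
  · calc |iteratedDeriv 1 f w| ≤ |-3 * t * w * f w| := by
          simpa [iteratedDeriv_one, hode] using habs (deriv f w)
      _ ≤ 3 * t * w := by
          rw [abs_mul, abs_of_nonpos (by linarith)]
          nlinarith [mul_le_mul_of_nonneg_left h0 htw]
      _ ≤ c := by nlinarith [mul_le_mul_of_nonneg_right ht htw]
  · have hA : 0 ≤ (2 * (m : ℝ) + 5) * t * w := by positivity
    have hB : 0 ≤ ((m : ℝ) + 1) * (m + 3) * t := by positivity
    calc |iteratedDeriv (m + 2) f w| ≤ |(1 + t * w ^ 2) * iteratedDeriv (m + 2) f w| := habs _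
      _ = |(2 * m + 5) * t * w * iteratedDeriv (m + 1) f w
            + (m + 1) * (m + 3) * t * iteratedDeriv m f w| := by
          rw [mul_iteratedDeriv_add_two_eq hf hode, ← abs_neg]
          congr 1
          ring
      _ ≤ _ := (abs_add_le _ _).trans_eq <| by
          rw [abs_mul, abs_of_nonneg hA, abs_mul, abs_of_nonneg hB]
  · exact recurrence_coeffs_le_of_two_mul_one_add_le ht hw hc m

theorem deriv_D_bound (t : ℝ) (ht : 1 ≤ t) (n : ℕ) (w : ℝ) (hw : 0 ≤ w) :
    |iteratedDeriv n (fun x : ℝ => (1 + t * x ^ 2) ^ (-(3 : ℝ) / 2)) w| ≤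
      (n.factorial : ℝ) * (2 * Real.exp (2 * t * w) * t) ^ n :=
  abs_iteratedDeriv_one_add_mul_sq_rpow_le ht hw
    (by nlinarith [Real.add_one_le_exp (2 * t * w)]) n
end

section
/- Let d ≥ 2 and 2 ≤ m ≤ d be integers, and let i_1, …, i_{2m−2} be nonnegative integers with each i_k ≤ d and i_1 + ⋯ + i_{2m−2} = m(m−1). Then ∏_{k=1}^{2m−2} C(d, i_k) ≤ (2ed/m)^{m(m−1)}. -/
/-!
Since `C(d, j) ≤ d^j / j!` and `j^j ≤ e^j j!`, we have `C(d, j) j^j ≤ (e d)^j`; multiplying over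
the `2m - 2` indices gives `∏ C(d, i_k) · ∏ i_k^{i_k} ≤ (e d)^{m(m-1)}`. By convexity of
`x ↦ x log x`, the product `∏ i_k^{i_k}` is at least `a^{m(m-1)}`, where `a = m/2` is the mean of
the `i_k`.
-/

open Finset Real
open scoped Nat

theorem Nat.choose_mul_pow_self_le (n k : ℕ) :
    (n.choose k : ℝ) * k ^ k ≤ (n * exp 1) ^ k :=
  calc (n.choose k : ℝ) * k ^ k ≤ (n ^ k / k ! : ℝ) * (exp 1 ^ k * k !) := by
        gcongr
        · exact choose_le_pow_div k n
        · rw [exp_one_pow, ← div_le_iff₀ (by positivity)]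
          exact pow_div_factorial_le_exp _ (by positivity) k
    _ = (n * exp 1) ^ k := by field_simp; ring

theorem Finset.sum_mul_log_sum_div_card_le {ι : Type*} (s : Finset ι) {x : ι → ℝ}
    (hx : ∀ k ∈ s, 0 ≤ x k) :
    (∑ k ∈ s, x k) * log ((∑ k ∈ s, x k) / #s) ≤ ∑ k ∈ s, x k * log (x k) := by
  rcases s.eq_empty_or_nonempty with rfl | hs
  · simp
  have hcard : (0 : ℝ) < #s := by exact_mod_cast hs.card_pos
  have jensen := convexOn_mul_log.map_sum_le (t := s) (w := fun _ => (#s : ℝ)⁻¹)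
    (fun _ _ => by positivity) (by simp [hcard.ne']) hx
  simp only [smul_eq_mul, ← div_eq_inv_mul, ← sum_div] at jensen
  calc (∑ k ∈ s, x k) * log ((∑ k ∈ s, x k) / #s)
      = #s * ((∑ k ∈ s, x k) / #s * log ((∑ k ∈ s, x k) / #s)) := by field_simp
    _ ≤ #s * ((∑ k ∈ s, x k * log (x k)) / #s) := by gcongr
    _ = ∑ k ∈ s, x k * log (x k) := by field_simp

theorem Finset.pow_sum_div_card_le_prod_pow_self {ι : Type*} (s : Finset ι) (x : ι → ℕ) :
    (((∑ k ∈ s, x k : ℕ) : ℝ) / #s) ^ (∑ k ∈ s, x k) ≤ ∏ k ∈ s, (x k : ℝ) ^ x k := by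
  rcases eq_or_ne (∑ k ∈ s, x k) 0 with hS | hS
  · rw [hS, pow_zero]
    exact (prod_eq_one fun k hk => by simp [sum_eq_zero_iff.1 hS k hk]).ge
  have hcard : (0 : ℝ) < #s := by exact_mod_cast (nonempty_of_sum_ne_zero hS).card_pos
  have hpow_self_pos (k : ι) : (0 : ℝ) < (x k : ℝ) ^ x k := by exact_mod_cast Nat.pow_self_pos
  rw [← log_le_log_iff (by positivity) (prod_pos fun k _ => hpow_self_pos k), log_pow,
    log_prod fun k _ => (hpow_self_pos k).ne']
  simp only [log_pow]
  push_cast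
  exact sum_mul_log_sum_div_card_le s fun k _ => by positivity

theorem Finset.prod_choose_le {ι : Type*} (s : Finset ι) (n : ℕ) (x : ι → ℕ) :
    ∏ k ∈ s, (n.choose (x k) : ℝ) ≤ (exp 1 * n * #s / (∑ k ∈ s, x k : ℕ)) ^ (∑ k ∈ s, x k) := by
  set S := ∑ k ∈ s, x k
  rcases eq_or_ne S 0 with hS0 | hS0
  · rw [hS0, pow_zero]
    exact (prod_eq_one fun k hk => by simp [sum_eq_zero_iff.1 hS0 k hk]).le
  have hcard : (0 : ℝ) < #s := by exact_mod_cast (nonempty_of_sum_ne_zero hS0).card_pos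
  have key : (∏ k ∈ s, (n.choose (x k) : ℝ)) * ((S : ℝ) / #s) ^ S ≤ (n * exp 1) ^ S :=
    calc (∏ k ∈ s, (n.choose (x k) : ℝ)) * ((S : ℝ) / #s) ^ S
        ≤ (∏ k ∈ s, (n.choose (x k) : ℝ)) * ∏ k ∈ s, (x k : ℝ) ^ x k := by
          gcongr
          exact pow_sum_div_card_le_prod_pow_self s x
      _ = ∏ k ∈ s, (n.choose (x k) : ℝ) * (x k : ℝ) ^ x k := prod_mul_distrib.symm
      _ ≤ ∏ k ∈ s, ((n : ℝ) * exp 1) ^ x k := by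
          gcongr with k
          exact Nat.choose_mul_pow_self_le n (x k)
      _ = (n * exp 1) ^ S := prod_pow_eq_pow_sum s x _
  rw [← le_div_iff₀ (by positivity), ← div_pow] at key
  refine key.trans_eq ?_
  rw [div_div_eq_mul_div]
  ring

theorem binom_product_bound'_general (d m : ℕ)
    (i : Fin (2 * m - 2) → ℕ) (hisum : ∑ k, i k = m * (m - 1)) :
    (∏ k, (d.choose (i k) : ℝ)) ≤ (2 * Real.exp 1 * d / m) ^ (m * (m - 1)) := by
  have h := prod_choose_le univ d i
  rw [hisum, card_univ, Fintype.card_fin] at h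
  refine h.trans_eq ?_
  rcases lt_or_ge m 2 with hm | hm
  · interval_cases m <;> simp
  · have hm1 : (m : ℝ) - 1 ≠ 0 := by
      rw [sub_ne_zero]; exact_mod_cast (by omega : m ≠ 1)
    push_cast [Nat.cast_sub (by omega : 2 ≤ 2 * m), Nat.cast_sub (by omega : 1 ≤ m)]
    field_simp

theorem binom_product_bound' (d m : ℕ) (hd : 2 ≤ d) (hm2 : 2 ≤ m) (hmd : m ≤ d)
    (i : Fin (2 * m - 2) → ℕ) (hile : ∀ k, i k ≤ d) (hisum : ∑ k, i k = m * (m - 1)) :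
    (∏ k, (d.choose (i k) : ℝ)) ≤ (2 * Real.exp 1 * d / m) ^ (m * (m - 1)) :=
  binom_product_bound'_general d m i hisum
end
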